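/- Let G = {m₁, …, m_q, n} be a finite set of monomials where each m_i is dominant with respect to G and n is not dominant. If L₁, L₂ ⊆ G satisfy lcm(L₁) = lcm(L₂) and L₁ ≠ L₂, then one of L₁, L₂ is obtained from the other by inserting n; i.e., {L₁, L₂} = {L, L ∪ {n}} for some L ⊆ G with n ∉ L. -/

import Mathlib

open Finset

variable {X : Type*} [DecidableEq X]

/-- The lcm of a finite set of monomials (monomials = finitely supported
exponent functions): pointwise maximum of exponents. -/
noncomputable def mlcm (L : Finset (X →₀ ℕ)) : X →₀ ℕ := L.sup id

/-- `m` is dominant with respect to `G`: some variable `x` appears in `m`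
with exponent at least `k > 0` while every other element of `G` has
`x`-exponent `< k`. -/
def Dominant (G : Finset (X →₀ ℕ)) (m : X →₀ ℕ) : Prop :=
  ∃ x : X, ∃ k : ℕ, 0 < k ∧ k ≤ m x ∧ ∀ m' ∈ G, m' ≠ m → m' x < k

/-- Total degree of a monomial: sum of its exponents. -/
def mdeg (m : X →₀ ℕ) : ℕ := m.sum fun _ e => e

/-! A dominant monomial `m`, with witness variable `x` and exponent `k`, lies in a subset `L ⊆ G`
exactly when the `x`-exponent of `lcm L` is at least `k`. Hence subsets of `G` with the same lcm
contain the same dominant monomials, so they can differ only in the one nondominant element `n`. -/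

theorem Finset.eq_insert_or_eq_insert_of_erase_eq {α : Type*} [DecidableEq α] {s t : Finset α}
    {a : α} (h : s.erase a = t.erase a) (hne : s ≠ t) :
    (a ∉ s ∧ t = insert a s) ∨ (a ∉ t ∧ s = insert a t) := by
  by_cases hs : a ∈ s <;> by_cases ht : a ∈ t
  · exact absurd (by rw [← insert_erase hs, ← insert_erase ht, h]) hne
  · exact .inr ⟨ht, by rw [← insert_erase hs, h, erase_eq_of_notMem ht]⟩
  · exact .inl ⟨hs, by rw [← insert_erase ht, ← h, erase_eq_of_notMem hs]⟩
  · exact absurd (by rw [← erase_eq_of_notMem hs, ← erase_eq_of_notMem ht, h]) hne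

theorem mlcm_apply (L : Finset (X →₀ ℕ)) (x : X) : mlcm L x = L.sup (· x) := by
  induction L using Finset.induction_on with
  | empty => rfl
  | insert m L _ ih => simp only [mlcm, sup_insert, Finsupp.sup_apply, id] at ih ⊢; rw [ih]

theorem Dominant.exists_forall_mem_iff_le_mlcm {G : Finset (X →₀ ℕ)} {m : X →₀ ℕ}
    (hm : Dominant G m) : ∃ x k, ∀ L ⊆ G, m ∈ L ↔ k ≤ mlcm L x := by
  obtain ⟨x, k, hk, hkm, hlt⟩ := hm
  refine ⟨x, k, fun L hL => ⟨fun hmL => ?_, fun hle => ?_⟩⟩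
  · exact hkm.trans (mlcm_apply L x ▸ le_sup (f := (· x)) hmL)
  · obtain ⟨m', hm'L, hkm'⟩ := (Finset.le_sup_iff hk).mp (mlcm_apply L x ▸ hle)
    by_contra hmL
    exact (hlt m' (hL hm'L) (ne_of_mem_of_not_mem hm'L hmL)).not_ge hkm'

theorem Dominant.mem_iff_of_mlcm_eq {G L₁ L₂ : Finset (X →₀ ℕ)} {m : X →₀ ℕ}
    (hm : Dominant G m) (h₁ : L₁ ⊆ G) (h₂ : L₂ ⊆ G) (hlcm : mlcm L₁ = mlcm L₂) :
    m ∈ L₁ ↔ m ∈ L₂ := by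
  obtain ⟨x, k, hmem⟩ := hm.exists_forall_mem_iff_le_mlcm
  rw [hmem L₁ h₁, hmem L₂ h₂, hlcm]

theorem semidominant_same_lcm_general (G : Finset (X →₀ ℕ)) (n : X →₀ ℕ)
    (hdom : ∀ m ∈ G, m ≠ n → Dominant G m)
    (L₁ L₂ : Finset (X →₀ ℕ)) (h1 : L₁ ⊆ G) (h2 : L₂ ⊆ G)
    (hlcm : mlcm L₁ = mlcm L₂) (hne : L₁ ≠ L₂) :
    (n ∉ L₁ ∧ L₂ = insert n L₁) ∨ (n ∉ L₂ ∧ L₁ = insert n L₂) := by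
  refine eq_insert_or_eq_insert_of_erase_eq (ext fun m => ?_) hne
  simp only [mem_erase, and_congr_right_iff]
  exact fun hmn => ⟨fun hm => ((hdom m (h1 hm) hmn).mem_iff_of_mlcm_eq h1 h2 hlcm).mp hm,
    fun hm => ((hdom m (h2 hm) hmn).mem_iff_of_mlcm_eq h1 h2 hlcm).mpr hm⟩

theorem semidominant_same_lcm (G : Finset (X →₀ ℕ)) (n : X →₀ ℕ) (hn : n ∈ G)
    (hnd : ¬ Dominant G n) (hdom : ∀ m ∈ G, m ≠ n → Dominant G m)
    (L₁ L₂ : Finset (X →₀ ℕ)) (h1 : L₁ ⊆ G) (h2 : L₂ ⊆ G)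
    (hlcm : mlcm L₁ = mlcm L₂) (hne : L₁ ≠ L₂) :
    (n ∉ L₁ ∧ L₂ = insert n L₁) ∨ (n ∉ L₂ ∧ L₁ = insert n L₂) :=
  semidominant_same_lcm_general G n hdom L₁ L₂ h1 h2 hlcm hne
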